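/- Let W ⊆ ℕ and let G_W ⊆ ℚ² be the subgroup generated by g₁ = (1,0), g₂ = (0,1), (g₁+g₂)/2, g₁/p_{2k+1} for all k ≥ 0, g₂/p_{2k+2} for all k ≥ 0, and additionally g₂/p_{2k+1} for all k ∈ W. If the complement of W is infinite, then G_W is indecomposable. -/

import Mathlib

noncomputable def nthPrime (i : ℕ) : ℕ := Nat.nth Nat.Prime i

/-- The group `G_W` of Theorem 5.2 associated to a set `W ⊆ ℕ`. -/
noncomputable def GW (W : Set ℕ) : AddSubgroup (ℚ × ℚ) :=
  AddSubgroup.closure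
    ({((1 : ℚ), (0 : ℚ)), ((0 : ℚ), (1 : ℚ)), ((1/2 : ℚ), (1/2 : ℚ))} ∪
      {x | ∃ k : ℕ, x = ((1 / (nthPrime (2 * k + 1)) : ℚ), (0 : ℚ))} ∪
      {x | ∃ k : ℕ, x = ((0 : ℚ), (1 / (nthPrime (2 * k + 2)) : ℚ))} ∪
      {x | ∃ k ∈ W, x = ((0 : ℚ), (1 / (nthPrime (2 * k + 1)) : ℚ))})

/-!
Suppose `G_W = A ⊕ B`. The element `(1, 0)` is divisible in `G_W` by the infinitely many primes
`p_{2k+1}`, `k ∉ W`, while second coordinates of `G_W` have no `p_{2k+1}` in their denominators;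
so both components of `(1, 0)` have second coordinate divisible by infinitely many primes, i.e. `0`.
Two nonzero elements of `A` and `B` cannot be rationally dependent, hence `(1, 0)` lies in `A` or
in `B`; likewise `(0, 1)`, using the primes `p_{2k+2}` and first coordinates. They cannot lie in the
same summand, since some multiple of every element is an integer combination of them. They cannot
lie in different summands either: splitting `(1/2, 1/2)` would give `(1/2, 0) ∈ G_W`, whereas
`x - y` has odd denominator for every `(x, y) ∈ G_W`.
-/

lemma nthPrime_prime (i : ℕ) : (nthPrime i).Prime :=
  Nat.nth_mem_of_infinite Nat.infinite_setOfPred_prime i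

lemma nthPrime_injective : Function.Injective nthPrime :=
  Nat.nth_injective Nat.infinite_setOfPred_prime

lemma nthPrime_zero : nthPrime 0 = 2 :=
  Nat.nth_prime_zero_eq_two

lemma nthPrime_coprime_nthPrime {i j : ℕ} (h : i ≠ j) : (nthPrime i).Coprime (nthPrime j) :=
  (Nat.coprime_primes (nthPrime_prime i) (nthPrime_prime j)).mpr (nthPrime_injective.ne h)

/-- The rationals whose denominator is prime to `p`; for `p` prime this is `ℤ_(p) ∩ ℚ`. -/
def pIntegral (p : ℕ) : AddSubgroup ℚ where
  carrier := {t | t.den.Coprime p}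
  zero_mem' := by simp
  add_mem' {a b} ha hb := Nat.Coprime.coprime_dvd_left (Rat.add_den_dvd a b) (ha.mul_left hb)
  neg_mem' := by simp

lemma mem_pIntegral {p : ℕ} {t : ℚ} : t ∈ pIntegral p ↔ t.den.Coprime p :=
  Iff.rfl

lemma intCast_mem_pIntegral (p : ℕ) (n : ℤ) : (n : ℚ) ∈ pIntegral p := by
  simp [mem_pIntegral]

lemma inv_natCast_mem_pIntegral {p q : ℕ} (h : q.Coprime p) : (q : ℚ)⁻¹ ∈ pIntegral p := by
  rw [mem_pIntegral, Rat.inv_natCast_den]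
  split_ifs
  exacts [Nat.coprime_one_left p, h]

lemma dvd_num_natAbs_of_eq_mul {p : ℕ} {s t : ℚ} (hs : s ∈ pIntegral p) (h : t = p * s) :
    p ∣ t.num.natAbs := by
  have key : t.num * s.den = p * (s.num * t.den) := by
    have : (t.num * s.den : ℚ) = p * (s.num * t.den) := by
      rw [← Rat.den_mul_eq_num t, ← Rat.den_mul_eq_num s, h]
      ring
    exact_mod_cast this
  exact hs.symm.dvd_of_dvd_mul_right
    ⟨s.num.natAbs * t.den, by simpa [Int.natAbs_mul] using congrArg Int.natAbs key⟩

lemma eq_zero_of_forall_eq_mul_pIntegral {P : Set ℕ} (hP : P.Infinite) {t : ℚ}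
    (h : ∀ p ∈ P, ∃ s ∈ pIntegral p, t = p * s) : t = 0 := by
  by_contra ht
  have hnum : t.num.natAbs ≠ 0 := by simpa using ht
  refine hP ((Set.finite_le_nat t.num.natAbs).subset fun p hp => ?_)
  obtain ⟨s, hs, hts⟩ := h p hp
  exact Nat.le_of_dvd (Nat.pos_of_ne_zero hnum) (dvd_num_natAbs_of_eq_mul hs hts)

namespace AddSubgroup

section Complement

variable {M : Type*} [AddCommGroup M] {A B : AddSubgroup M}

lemma exists_add_eq_of_isCompl (h : IsCompl A B) (g : M) : ∃ a ∈ A, ∃ b ∈ B, a + b = g :=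
  mem_sup.mp (h.sup_eq_top ▸ mem_top g)

lemma eq_of_add_eq_add_of_disjoint (h : Disjoint A B) {a a' b b' : M} (ha : a ∈ A)
    (ha' : a' ∈ A) (hb : b ∈ B) (hb' : b' ∈ B) (hab : a + b = a' + b') : a = a' := by
  have hsub : a - a' = b' - b := sub_eq_sub_iff_add_eq_add.mpr (hab.trans (add_comm _ _))
  exact sub_eq_zero.mp (disjoint_def.mp h (sub_mem ha ha') (hsub ▸ sub_mem hb' hb))

lemma exists_nsmul_eq_of_nsmul_eq_add (h : IsCompl A B) {n : ℕ} {x a b : M} (ha : a ∈ A)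
    (hb : b ∈ B) (hx : n • x = a + b) : ∃ a' ∈ A, n • a' = a := by
  obtain ⟨a', ha', b', hb', rfl⟩ := exists_add_eq_of_isCompl h x
  refine ⟨a', ha', eq_of_add_eq_add_of_disjoint h.disjoint (nsmul_mem ha' n) ha
    (nsmul_mem hb' n) hb ?_⟩
  rwa [← smul_add]

lemma eq_zero_of_zsmul_mem [IsAddTorsionFree M] (h : Disjoint A B) {a : M} {n : ℤ} (ha : a ∈ A)
    (hn : n ≠ 0) (hna : n • a ∈ B) : a = 0 :=
  (IsAddTorsionFree.zsmul_eq_zero_iff.mp (disjoint_def.mp h (zsmul_mem ha n) hna)).resolve_right hn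

lemma map_eq_zero_of_forall_divisible (h : IsCompl A B) (φ : M →+ ℚ) {P : Set ℕ}
    (hP : P.Infinite) (hφ : ∀ p ∈ P, ∀ x, φ x ∈ pIntegral p) {a b : M} (ha : a ∈ A)
    (hb : b ∈ B) (hdiv : ∀ p ∈ P, ∃ x, p • x = a + b) : φ a = 0 := by
  refine eq_zero_of_forall_eq_mul_pIntegral hP fun p hp => ?_
  obtain ⟨x, hx⟩ := hdiv p hp
  obtain ⟨a', -, rfl⟩ := exists_nsmul_eq_of_nsmul_eq_add h ha hb hx
  exact ⟨φ a', hφ p hp a', by rw [map_nsmul, nsmul_eq_mul]⟩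

end Complement

section RationalVectorSpace

variable {V : Type*} [AddCommGroup V] [Module ℚ V] {G : AddSubgroup V} {A B : AddSubgroup G}

lemma eq_zero_or_eq_zero_of_mem_span_singleton (h : Disjoint A B) {a b : G} (ha : a ∈ A)
    (hb : b ∈ B) {v : V} (hav : (a : V) ∈ ℚ ∙ v) (hbv : (b : V) ∈ ℚ ∙ v) : a = 0 ∨ b = 0 := by
  have := IsAddTorsionFree.of_module_rat V
  obtain ⟨s, hs⟩ := Submodule.mem_span_singleton.mp hav
  obtain ⟨u, hu⟩ := Submodule.mem_span_singleton.mp hbv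
  rcases eq_or_ne u 0 with rfl | hu0
  · right
    ext
    simp [← hu]
  -- `(u.num * s.den) • a` and `(s.num * u.den) • b` both equal `(s.num * u.num) • v`
  have hab : (u.num * s.den) • a = (s.num * u.den) • b := by
    ext
    simp only [coe_zsmul, ← hs, ← hu, smul_smul, ← Int.cast_smul_eq_zsmul ℚ]
    congr 1
    push_cast
    rw [← Rat.den_mul_eq_num s, ← Rat.den_mul_eq_num u]
    ring
  left
  refine eq_zero_of_zsmul_mem (n := u.num * s.den) h ha
    (mul_ne_zero (Rat.num_ne_zero.mpr hu0) (by simp)) ?_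
  rw [hab]
  exact zsmul_mem hb _

lemma mem_or_mem_of_forall_divisible (h : IsCompl A B) (φ : G →+ ℚ) {v : V}
    (hker : ∀ x : G, φ x = 0 → (x : V) ∈ ℚ ∙ v) {P : Set ℕ} (hP : P.Infinite)
    (hφ : ∀ p ∈ P, ∀ x, φ x ∈ pIntegral p) {g : G} (hg : ∀ p ∈ P, ∃ x, p • x = g) :
    g ∈ A ∨ g ∈ B := by
  obtain ⟨a, ha, b, hb, rfl⟩ := exists_add_eq_of_isCompl h g
  have hφa := map_eq_zero_of_forall_divisible h φ hP hφ ha hb hg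
  have hφb := map_eq_zero_of_forall_divisible h.symm φ hP hφ hb ha
    (by simpa only [add_comm] using hg)
  rcases eq_zero_or_eq_zero_of_mem_span_singleton h.disjoint ha hb (hker a hφa) (hker b hφb)
    with rfl | rfl
  · simpa using Or.inr hb
  · simpa using Or.inl ha

end RationalVectorSpace

section RationalPlane

variable {G : AddSubgroup (ℚ × ℚ)} {A B : AddSubgroup G}

lemma eq_bot_of_basis_mem (h : Disjoint A B) {e₁ e₂ : G} (he₁ : (e₁ : ℚ × ℚ) = (1, 0))
    (he₂ : (e₂ : ℚ × ℚ) = (0, 1)) (h₁ : e₁ ∈ A) (h₂ : e₂ ∈ A) : B = ⊥ := by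
  refine (eq_bot_iff_forall B).mpr ?_
  rintro ⟨⟨x, y⟩, hxy⟩ hg
  have hg' : (x.den * y.den : ℤ) • (⟨(x, y), hxy⟩ : G) =
      (x.num * y.den) • e₁ + (y.num * x.den) • e₂ := by
    ext
    · simp [he₁, he₂]
      linear_combination (y.den : ℚ) * Rat.den_mul_eq_num x
    · simp [he₁, he₂]
      linear_combination (x.den : ℚ) * Rat.den_mul_eq_num y
  refine eq_zero_of_zsmul_mem (n := x.den * y.den) h.symm hg (by simp) ?_
  rw [hg']
  exact add_mem (zsmul_mem h₁ _) (zsmul_mem h₂ _)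

lemma notMem_of_mem_of_fst_sub_snd_mem_pIntegral (h : IsCompl A B)
    (hG : ∀ x ∈ G, x.1 - x.2 ∈ pIntegral 2) {e₁ e₂ w : G} (he₁ : (e₁ : ℚ × ℚ) = (1, 0))
    (he₂ : (e₂ : ℚ × ℚ) = (0, 1)) (hw : (w : ℚ × ℚ) = (2⁻¹, 2⁻¹)) (h₁ : e₁ ∈ A) : e₂ ∉ B := by
  intro h₂
  obtain ⟨c, hc, d, hd, rfl⟩ := exists_add_eq_of_isCompl h w
  have h2c : 2 • c = e₁ := by
    refine eq_of_add_eq_add_of_disjoint h.disjoint (nsmul_mem hc 2) h₁ (nsmul_mem hd 2) h₂ ?_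
    ext <;> simp [← smul_add, hw, he₁, he₂]
  have hc' : (c : ℚ × ℚ) = (2⁻¹, 0) := by
    have := congrArg Subtype.val h2c
    ext <;> simp [he₁, Prod.ext_iff] at this ⊢ <;> linarith
  have := hG c c.2
  rw [hc'] at this
  norm_num [mem_pIntegral] at this

end RationalPlane

end AddSubgroup

namespace GW

variable {W : Set ℕ}

lemma le_iff {H : AddSubgroup (ℚ × ℚ)} : GW W ≤ H ↔
    (1, 0) ∈ H ∧ (0, 1) ∈ H ∧ (2⁻¹, 2⁻¹) ∈ H ∧
      (∀ k, ((nthPrime (2 * k + 1) : ℚ)⁻¹, 0) ∈ H) ∧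
      (∀ k, (0, (nthPrime (2 * k + 2) : ℚ)⁻¹) ∈ H) ∧
      ∀ k ∈ W, (0, (nthPrime (2 * k + 1) : ℚ)⁻¹) ∈ H := by
  simp only [GW, AddSubgroup.closure_le, Set.union_subset_iff, Set.insert_subset_iff,
    Set.singleton_subset_iff, Set.ofPred_subset, SetLike.mem_coe, one_div, and_assoc,
    forall_exists_index, and_imp]
  grind

lemma generators_mem : (1, 0) ∈ GW W ∧ (0, 1) ∈ GW W ∧ (2⁻¹, 2⁻¹) ∈ GW W ∧
      (∀ k, ((nthPrime (2 * k + 1) : ℚ)⁻¹, 0) ∈ GW W) ∧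
      (∀ k, (0, (nthPrime (2 * k + 2) : ℚ)⁻¹) ∈ GW W) ∧
      ∀ k ∈ W, (0, (nthPrime (2 * k + 1) : ℚ)⁻¹) ∈ GW W :=
  le_iff.mp le_rfl

lemma inv_nthPrime_mem_pIntegral {i j : ℕ} (h : j ≠ i) :
    (nthPrime j : ℚ)⁻¹ ∈ pIntegral (nthPrime i) :=
  inv_natCast_mem_pIntegral (nthPrime_coprime_nthPrime h)

lemma inv_two_mem_pIntegral {i : ℕ} (h : i ≠ 0) : (2⁻¹ : ℚ) ∈ pIntegral (nthPrime i) := by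
  simpa [nthPrime_zero] using inv_nthPrime_mem_pIntegral h.symm

lemma inv_nthPrime_mem_pIntegral_two {j : ℕ} (h : j ≠ 0) : (nthPrime j : ℚ)⁻¹ ∈ pIntegral 2 :=
  nthPrime_zero ▸ inv_nthPrime_mem_pIntegral h

lemma snd_mem_pIntegral {k : ℕ} (hk : k ∉ W) {x : ℚ × ℚ} (hx : x ∈ GW W) :
    x.2 ∈ pIntegral (nthPrime (2 * k + 1)) := by
  refine le_iff (H := (pIntegral _).comap (AddMonoidHom.snd ℚ ℚ)).mpr ?_ hx
  simp only [AddSubgroup.mem_comap, AddMonoidHom.coe_snd, zero_mem, true_and, implies_true]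
  refine ⟨intCast_mem_pIntegral _ 1, inv_two_mem_pIntegral (by omega),
    fun j => inv_nthPrime_mem_pIntegral (by omega),
    fun j hj => inv_nthPrime_mem_pIntegral (by grind)⟩

lemma fst_mem_pIntegral (k : ℕ) {x : ℚ × ℚ} (hx : x ∈ GW W) :
    x.1 ∈ pIntegral (nthPrime (2 * k + 2)) := by
  refine le_iff (H := (pIntegral _).comap (AddMonoidHom.fst ℚ ℚ)).mpr ?_ hx
  simp only [AddSubgroup.mem_comap, AddMonoidHom.coe_fst, zero_mem, true_and, implies_true,
    and_true]
  exact ⟨intCast_mem_pIntegral _ 1, inv_two_mem_pIntegral (by omega),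
    fun j => inv_nthPrime_mem_pIntegral (by omega)⟩

lemma fst_sub_snd_mem_pIntegral_two {x : ℚ × ℚ} (hx : x ∈ GW W) : x.1 - x.2 ∈ pIntegral 2 := by
  refine le_iff (H := (pIntegral 2).comap (AddMonoidHom.fst ℚ ℚ - AddMonoidHom.snd ℚ ℚ)).mpr
    ?_ hx
  simp only [AddSubgroup.mem_comap, AddMonoidHom.sub_apply, AddMonoidHom.coe_fst,
    AddMonoidHom.coe_snd, sub_zero, zero_sub, neg_mem_iff, sub_self, zero_mem, true_and,
    and_self_left]
  exact ⟨intCast_mem_pIntegral _ 1, fun k => inv_nthPrime_mem_pIntegral_two (by omega),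
    fun k => inv_nthPrime_mem_pIntegral_two (by omega),
    fun k _ => inv_nthPrime_mem_pIntegral_two (by omega)⟩

def e₁ (W : Set ℕ) : GW W := ⟨(1, 0), generators_mem.1⟩

def e₂ (W : Set ℕ) : GW W := ⟨(0, 1), generators_mem.2.1⟩

def half (W : Set ℕ) : GW W := ⟨(2⁻¹, 2⁻¹), generators_mem.2.2.1⟩

lemma e₁_mem_or_mem (hW : Wᶜ.Infinite) {A B : AddSubgroup (GW W)} (h : IsCompl A B) :
    e₁ W ∈ A ∨ e₁ W ∈ B := by
  refine AddSubgroup.mem_or_mem_of_forall_divisible h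
    ((AddMonoidHom.snd ℚ ℚ).comp (GW W).subtype) (v := (1, 0)) (fun x hx => ?_)
    (P := (fun k => nthPrime (2 * k + 1)) '' Wᶜ)
    (hW.image fun a _ b _ hab => by have := nthPrime_injective hab; omega) ?_ ?_
  · exact Submodule.mem_span_singleton.mpr ⟨(x : ℚ × ℚ).1, by ext <;> simp_all⟩
  · rintro _ ⟨k, hk, rfl⟩ x
    exact snd_mem_pIntegral hk x.2
  · rintro _ ⟨k, -, rfl⟩
    obtain ⟨-, -, -, hodd, -⟩ := generators_mem (W := W)
    exact ⟨⟨_, hodd k⟩, by ext <;> simp [e₁, (nthPrime_prime _).ne_zero]⟩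

lemma e₂_mem_or_mem {A B : AddSubgroup (GW W)} (h : IsCompl A B) : e₂ W ∈ A ∨ e₂ W ∈ B := by
  refine AddSubgroup.mem_or_mem_of_forall_divisible h
    ((AddMonoidHom.fst ℚ ℚ).comp (GW W).subtype) (v := (0, 1)) (fun x hx => ?_)
    (P := Set.range fun k => nthPrime (2 * k + 2))
    (Set.infinite_range_of_injective fun a b hab => by have := nthPrime_injective hab; omega)
    ?_ ?_
  · exact Submodule.mem_span_singleton.mpr ⟨(x : ℚ × ℚ).2, by ext <;> simp_all⟩
  · rintro _ ⟨k, rfl⟩ x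
    exact fst_mem_pIntegral k x.2
  · rintro _ ⟨k, rfl⟩
    obtain ⟨-, -, -, -, heven, -⟩ := generators_mem (W := W)
    exact ⟨⟨_, heven k⟩, by ext <;> simp [e₂, (nthPrime_prime _).ne_zero]⟩

end GW

theorem GW_indecomposable_of_coinfinite (W : Set ℕ) (hW : Wᶜ.Infinite) :
    ¬ ∃ A B : AddSubgroup (GW W),
      A ≠ ⊥ ∧ B ≠ ⊥ ∧ A ⊔ B = ⊤ ∧ A ⊓ B = ⊥ := by
  rintro ⟨A, B, hA, hB, hsup, hinf⟩
  have h : IsCompl A B := .of_eq hinf hsup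
  have h2 : ∀ x ∈ GW W, x.1 - x.2 ∈ pIntegral 2 := fun _ => GW.fst_sub_snd_mem_pIntegral_two
  rcases GW.e₁_mem_or_mem hW h with h₁ | h₁ <;> rcases GW.e₂_mem_or_mem h with h₂ | h₂
  · exact hB (AddSubgroup.eq_bot_of_basis_mem h.disjoint rfl rfl h₁ h₂)
  · exact AddSubgroup.notMem_of_mem_of_fst_sub_snd_mem_pIntegral h h2 rfl rfl
      (w := GW.half W) rfl h₁ h₂
  · exact AddSubgroup.notMem_of_mem_of_fst_sub_snd_mem_pIntegral h.symm h2 rfl rfl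
      (w := GW.half W) rfl h₁ h₂
  · exact hA (AddSubgroup.eq_bot_of_basis_mem h.symm.disjoint rfl rfl h₁ h₂)
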